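/- arXiv:2308.13041 — 2 statements merged into one kernel-verified Lean document; each statement's English description precedes it below -/
import Mathlib

section
/- Let G = (V,E) be a finite simple undirected graph with adjacency matrix A, and let β ≥ 1 be a real number. Then the stability number satisfies −α(G) = min over all x ∈ {0,1}^V of ( −∑_{i∈V} x_i + β · xᵀAx ); equivalently, α(G) = max over all x ∈ {0,1}^V of ( ∑_{i∈V} x_i − β · xᵀAx ). -/
open Matrix BigOperators

def IsStableSet {V : Type*} (G : SimpleGraph V) (s : Set V) : Prop :=
  s.Pairwise fun i j => ¬ G.Adj i j

noncomputable def stabilityNumber {V : Type*} [Fintype V] (G : SimpleGraph V) : ℕ :=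
  sSup {n : ℕ | ∃ s : Finset V, IsStableSet G ↑s ∧ s.card = n}

section Aux
variable {V : Type*} [Fintype V] [DecidableEq V]

lemma stab_bddAbove (G : SimpleGraph V) :
    BddAbove {n : ℕ | ∃ s : Finset V, IsStableSet G ↑s ∧ s.card = n} := by
  refine ⟨Fintype.card V, ?_⟩
  rintro n ⟨s, -, rfl⟩
  exact le_trans s.card_le_univ (le_of_eq Finset.card_univ)

lemma card_le_stab (G : SimpleGraph V) {s : Finset V} (h : IsStableSet G ↑s) :
    s.card ≤ stabilityNumber G :=
  le_csSup (stab_bddAbove G) ⟨s, h, rfl⟩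

lemma exists_max_stable (G : SimpleGraph V) :
    ∃ s : Finset V, IsStableSet G ↑s ∧ s.card = stabilityNumber G := by
  have hne : (0:ℕ) ∈ {n : ℕ | ∃ s : Finset V, IsStableSet G ↑s ∧ s.card = n} :=
    ⟨∅, by simp [IsStableSet], by simp⟩
  exact Nat.sSup_mem ⟨0, hne⟩ (stab_bddAbove G)

lemma exists_stable_del (G : SimpleGraph V) [DecidableRel G.Adj] (s : Finset V) :
    ∃ t, t ⊆ s ∧ IsStableSet G ↑t ∧
      s.card ≤ t.card + ((s ×ˢ s).filter (fun p => G.Adj p.1 p.2)).card := by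
  generalize hn : ((s ×ˢ s).filter (fun p => G.Adj p.1 p.2)).card = n
  induction n using Nat.strong_induction_on generalizing s with
  | _ n ih =>
    rcases Nat.eq_zero_or_pos n with h0 | h0
    · subst h0
      refine ⟨s, subset_rfl, ?_, by omega⟩
      intro i hi j hj _ hadj
      have hmem : (i, j) ∈ (s ×ˢ s).filter (fun p => G.Adj p.1 p.2) := by
        simp only [Finset.mem_filter, Finset.mem_product]
        exact ⟨⟨Finset.mem_coe.mp hi, Finset.mem_coe.mp hj⟩, hadj⟩
      have := Finset.card_pos.mpr ⟨_, hmem⟩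
      omega
    · obtain ⟨p, hp⟩ : ((s ×ˢ s).filter (fun p => G.Adj p.1 p.2)).Nonempty :=
        Finset.card_pos.mp (by omega)
      simp only [Finset.mem_filter, Finset.mem_product] at hp
      set s' := s.erase p.1 with hs'
      have hsub : (s' ×ˢ s').filter (fun p => G.Adj p.1 p.2) ⊂
          (s ×ˢ s).filter (fun p => G.Adj p.1 p.2) := by
        constructor
        · intro q hq
          simp only [Finset.mem_filter, Finset.mem_product, hs'] at hq ⊢
          exact ⟨⟨Finset.mem_of_mem_erase hq.1.1, Finset.mem_of_mem_erase hq.1.2⟩, hq.2⟩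
        · intro hc
          have := hc (Finset.mem_filter.mpr ⟨Finset.mem_product.mpr ⟨hp.1.1, hp.1.2⟩, hp.2⟩)
          simp only [Finset.mem_filter, Finset.mem_product, hs'] at this
          exact (Finset.notMem_erase p.1 s) this.1.1
      have hlt : ((s' ×ˢ s').filter (fun p => G.Adj p.1 p.2)).card < n :=
        hn ▸ Finset.card_lt_card hsub
      obtain ⟨t, hts, hstab, hcard⟩ := ih _ hlt s' rfl
      refine ⟨t, hts.trans (Finset.erase_subset _ _), hstab, ?_⟩
      have h1 : s'.card + 1 = s.card := Finset.card_erase_add_one hp.1.1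
      omega

lemma sum_eq_card (x : V → ℝ) (hx : ∀ i, x i = 0 ∨ x i = 1) :
    ∑ i, x i = ((Finset.univ.filter (fun i => x i = 1)).card : ℝ) := by
  rw [Finset.card_filter]
  push_cast
  refine Finset.sum_congr rfl fun i _ => ?_
  rcases hx i with h | h <;> simp [h]

lemma quad_eq (G : SimpleGraph V) [DecidableRel G.Adj] (x : V → ℝ)
    (hx : ∀ i, x i = 0 ∨ x i = 1) :
    x ⬝ᵥ (G.adjMatrix ℝ) *ᵥ x =
      ((((Finset.univ.filter (fun i => x i = 1)) ×ˢ (Finset.univ.filter (fun i => x i = 1))).filter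
        (fun p => G.Adj p.1 p.2)).card : ℝ) := by
  rw [dotProduct]
  have h1 : ∀ i, x i * ((G.adjMatrix ℝ) *ᵥ x) i
      = ∑ j, if x i = 1 ∧ x j = 1 ∧ G.Adj i j then (1:ℝ) else 0 := by
    intro i
    rw [mulVec, dotProduct, Finset.mul_sum]
    refine Finset.sum_congr rfl fun j _ => ?_
    rw [SimpleGraph.adjMatrix_apply]
    rcases hx i with h | h <;> rcases hx j with h' | h' <;>
      by_cases ha : G.Adj i j <;> simp [h, h', ha]
  simp_rw [h1]
  rw [← Finset.sum_product', Finset.univ_product_univ, Finset.sum_boole]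
  congr 1
  apply Finset.card_nbij (fun p => p) <;>
    simp +contextual [Set.MapsTo, Set.SurjOn, Set.subset_def, Set.InjOn, and_assoc]

end Aux

/-- For `β ≥ 1`, `-α(G)` is the minimum of `-∑ x_i + β·xᵀAx` over binary vectors `x`;
equivalently, `α(G)` is the maximum of `∑ x_i - β·xᵀAx` over binary vectors `x`. -/
theorem neg_stabilityNumber_eq_min_qubo {V : Type*} [Fintype V] [DecidableEq V]
    (G : SimpleGraph V) [DecidableRel G.Adj] (β : ℝ) (hβ : 1 ≤ β) :
    IsLeast {r : ℝ | ∃ x : V → ℝ, (∀ i, x i = 0 ∨ x i = 1) ∧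
        r = -(∑ i, x i) + β * (x ⬝ᵥ (G.adjMatrix ℝ) *ᵥ x)}
      (-(stabilityNumber G : ℝ)) ∧
    IsGreatest {r : ℝ | ∃ x : V → ℝ, (∀ i, x i = 0 ∨ x i = 1) ∧
        r = (∑ i, x i) - β * (x ⬝ᵥ (G.adjMatrix ℝ) *ᵥ x)}
      ((stabilityNumber G : ℝ)) := by
  obtain ⟨s₀, hs₀, hcard₀⟩ := exists_max_stable G
  set x₀ : V → ℝ := fun i => if i ∈ s₀ then 1 else 0 with hx₀
  have hbin : ∀ i, x₀ i = 0 ∨ x₀ i = 1 := fun i => by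
    by_cases h : i ∈ s₀ <;> simp [hx₀, h]
  have hfilt : Finset.univ.filter (fun i => x₀ i = 1) = s₀ := by
    ext i; by_cases h : i ∈ s₀ <;> simp [hx₀, h]
  have hsum : ∑ i, x₀ i = (stabilityNumber G : ℝ) := by
    rw [sum_eq_card x₀ hbin, hfilt, hcard₀]
  have hqz : x₀ ⬝ᵥ (G.adjMatrix ℝ) *ᵥ x₀ = 0 := by
    rw [quad_eq G x₀ hbin, hfilt]
    have : (s₀ ×ˢ s₀).filter (fun p => G.Adj p.1 p.2) = ∅ := by
      rw [Finset.filter_eq_empty_iff]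
      rintro ⟨i, j⟩ hp ha
      rw [Finset.mem_product] at hp
      exact hs₀ (Finset.mem_coe.mpr hp.1) (Finset.mem_coe.mpr hp.2) ha.ne ha
    simp [this]
  have key : ∀ x : V → ℝ, (∀ i, x i = 0 ∨ x i = 1) →
      -(stabilityNumber G : ℝ) ≤ -(∑ i, x i) + β * (x ⬝ᵥ (G.adjMatrix ℝ) *ᵥ x) := by
    intro x hx
    set s := Finset.univ.filter (fun i => x i = 1) with hs
    obtain ⟨t, hts, hstab, hc⟩ := exists_stable_del G s
    have ht := card_le_stab G hstab
    rw [sum_eq_card x hx, quad_eq G x hx, ← hs]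
    have h1 : (s.card : ℝ) ≤ (t.card : ℝ)
        + (((s ×ˢ s).filter (fun p => G.Adj p.1 p.2)).card : ℝ) := by exact_mod_cast hc
    have h2 : (t.card : ℝ) ≤ (stabilityNumber G : ℝ) := by exact_mod_cast ht
    have h3 : (0:ℝ) ≤ (((s ×ˢ s).filter (fun p => G.Adj p.1 p.2)).card : ℝ) :=
      Nat.cast_nonneg _
    nlinarith
  refine ⟨⟨⟨x₀, hbin, by rw [hsum, hqz]; ring⟩, ?_⟩,
    ⟨⟨x₀, hbin, by rw [hsum, hqz]; ring⟩, ?_⟩⟩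
  · rintro r ⟨x, hx, rfl⟩
    exact key x hx
  · rintro r ⟨x, hx, rfl⟩
    have := key x hx
    linarith
end

section
/- Let G = (V,E) be a finite simple undirected graph with adjacency matrix A and let β ≥ 1 be a real number. If x ∈ {0,1}^V attains the minimum of the function x ↦ −∑_{i∈V} x_i + β·xᵀAx over {0,1}^V, then the support S = {i ∈ V : x_i = 1} is a stable set of G of maximum cardinality, i.e. |S| = α(G). -/
open Matrix BigOperators

/-!
A binary vector is the indicator of a vertex set `S`, and the objective at it is
`-|S| + β · 2e(S)`, where `e(S)` counts the edges inside `S`. Deleting from `S` an endpoint `v` of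
such an edge lowers `|S|` by one and `2e(S)` by `2 deg_S v ≥ 2`, a net gain of at least
`2β - 1 > 0`; so a minimizer has stable support. On stable sets the objective is `-|S|`, so
minimality also makes `S` of maximum cardinality.
-/

open Finset

section

variable {V : Type*} {G : SimpleGraph V}

theorem Matrix.indicator_dotProduct_mulVec_indicator [Fintype V] {R : Type*} [NonAssocSemiring R]
    (A : Matrix V V R) (s : Finset V) :
    (s : Set V).indicator 1 ⬝ᵥ A *ᵥ (s : Set V).indicator 1 = ∑ i ∈ s, ∑ j ∈ s, A i j := by
  classical
  simp [dotProduct, mulVec, Set.indicator_apply]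

theorem Finset.sum_indicator_one_univ [Fintype V] {R : Type*} [AddCommMonoidWithOne R]
    (s : Finset V) : ∑ i, (s : Set V).indicator (1 : V → R) i = #s := by
  classical
  simp [Set.indicator_apply]

theorem eq_indicator_of_forall_eq_zero_or_eq_one [Fintype V] {x : V → ℝ}
    (hx : ∀ i, x i = 0 ∨ x i = 1) : x = ({i | x i = 1}.toFinset : Set V).indicator 1 := by
  ext i
  rcases hx i with h | h <;> simp [h]

theorem indicator_eq_zero_or_eq_one (s : Set V) (i : V) :
    s.indicator (1 : V → ℝ) i = 0 ∨ s.indicator (1 : V → ℝ) i = 1 := by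
  classical
  by_cases h : i ∈ s <;> simp [h]

theorem stabilityNumber_eq_card [Fintype V] {s : Finset V} (hs : IsStableSet G s)
    (hmax : ∀ t : Finset V, IsStableSet G t → #t ≤ #s) : stabilityNumber G = #s := by
  refine le_antisymm (csSup_le ⟨_, s, hs, rfl⟩ ?_) (le_csSup ⟨#s, ?_⟩ ⟨s, hs, rfl⟩) <;>
    rintro _ ⟨t, ht, rfl⟩ <;> exact hmax t ht

/-- Twice the number of edges of `G` inside `s`. -/
noncomputable def adjSum (G : SimpleGraph V) [DecidableRel G.Adj] (s : Finset V) : ℝ :=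
  ∑ i ∈ s, ∑ j ∈ s, G.adjMatrix ℝ i j

/-- The QUBO objective evaluated at the indicator vector of `s`. -/
noncomputable def quboCost (G : SimpleGraph V) [DecidableRel G.Adj] (β : ℝ) (s : Finset V) : ℝ :=
  -(#s : ℝ) + β * adjSum G s

variable [DecidableRel G.Adj]

theorem adjSum_eq_zero_of_isStableSet {s : Finset V} (hs : IsStableSet G s) : adjSum G s = 0 :=
  sum_eq_zero fun i hi => sum_eq_zero fun j hj => by
    by_cases hij : i = j
    · simp [hij]
    · simp [hs hi hj hij]

theorem adjSum_eq_adjSum_erase_add [DecidableEq V] {s : Finset V} {v : V} (hv : v ∈ s) :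
    adjSum G s = adjSum G (s.erase v) + 2 * ∑ j ∈ s, G.adjMatrix ℝ v j := by
  have hcol : ∑ i ∈ s.erase v, G.adjMatrix ℝ i v = ∑ j ∈ s.erase v, G.adjMatrix ℝ v j := by
    simp [G.adj_comm]
  have hdiag : G.adjMatrix ℝ v v = 0 := by simp
  unfold adjSum
  rw [← add_sum_erase s _ hv]
  simp_rw [← add_sum_erase s _ hv, sum_add_distrib, hcol, hdiag]
  ring

theorem exists_adjSum_erase_add_two_le [DecidableEq V] {s : Finset V}
    (hs : ¬ IsStableSet G s) : ∃ v ∈ s, adjSum G (s.erase v) + 2 ≤ adjSum G s := by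
  obtain ⟨v, hv, w, hw, -, hvw⟩ : ∃ v ∈ s, ∃ w ∈ s, v ≠ w ∧ G.Adj v w := by
    simpa [IsStableSet, Set.Pairwise] using hs
  have hdeg : 1 ≤ ∑ j ∈ s, G.adjMatrix ℝ v j := by
    calc (1 : ℝ) = G.adjMatrix ℝ v w := by simp [hvw]
      _ ≤ _ := single_le_sum (fun j _ => by rw [SimpleGraph.adjMatrix_apply]; positivity) hw
  exact ⟨v, hv, by rw [adjSum_eq_adjSum_erase_add hv]; linarith⟩

variable {β : ℝ} {s : Finset V}

theorem isStableSet_of_forall_quboCost_le (hβ : 1 / 2 < β)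
    (hmin : ∀ t, quboCost G β s ≤ quboCost G β t) : IsStableSet G s := by
  classical
  by_contra hs
  obtain ⟨v, hv, hdrop⟩ := exists_adjSum_erase_add_two_le hs
  have hle := hmin (s.erase v)
  rw [quboCost, quboCost, cast_card_erase_of_mem hv] at hle
  nlinarith

theorem card_le_of_forall_quboCost_le (hs : IsStableSet G s)
    (hmin : ∀ t, quboCost G β s ≤ quboCost G β t) {t : Finset V} (ht : IsStableSet G t) :
    #t ≤ #s := by
  have := hmin t
  simp only [quboCost, adjSum_eq_zero_of_isStableSet hs, adjSum_eq_zero_of_isStableSet ht] at this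
  exact_mod_cast (by linarith : (#t : ℝ) ≤ #s)

end

theorem support_of_qubo_minimizer_isMaxStableSet_general {V : Type*} [Fintype V]
    (G : SimpleGraph V) [DecidableRel G.Adj] (β : ℝ) (hβ : 1 ≤ β)
    (x : V → ℝ) (hx : ∀ i, x i = 0 ∨ x i = 1)
    (hmin : ∀ y : V → ℝ, (∀ i, y i = 0 ∨ y i = 1) →
      -(∑ i, x i) + β * (x ⬝ᵥ (G.adjMatrix ℝ) *ᵥ x) ≤
        -(∑ i, y i) + β * (y ⬝ᵥ (G.adjMatrix ℝ) *ᵥ y)) :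
    IsStableSet G {i | x i = 1} ∧ {i | x i = 1}.ncard = stabilityNumber G := by
  classical
  set S := {i | x i = 1}.toFinset
  have hcost : ∀ t, quboCost G β S ≤ quboCost G β t := fun t => by
    have := hmin _ (indicator_eq_zero_or_eq_one t)
    rwa [eq_indicator_of_forall_eq_zero_or_eq_one hx, indicator_dotProduct_mulVec_indicator,
      indicator_dotProduct_mulVec_indicator, sum_indicator_one_univ, sum_indicator_one_univ] at this
  have hS : IsStableSet G S := isStableSet_of_forall_quboCost_le (by linarith) hcost
  refine ⟨by simpa [S] using hS, ?_⟩
  rw [Set.ncard_eq_toFinset_card', stabilityNumber_eq_card hS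
    fun t ht => card_le_of_forall_quboCost_le hS hcost ht]

/-- If a binary vector `x` minimizes `-∑ x_i + β·xᵀAx` over binary vectors (`β ≥ 1`),
then its support is a maximum stable set of `G`. -/
theorem support_of_qubo_minimizer_isMaxStableSet {V : Type*} [Fintype V] [DecidableEq V]
    (G : SimpleGraph V) [DecidableRel G.Adj] (β : ℝ) (hβ : 1 ≤ β)
    (x : V → ℝ) (hx : ∀ i, x i = 0 ∨ x i = 1)
    (hmin : ∀ y : V → ℝ, (∀ i, y i = 0 ∨ y i = 1) →
      -(∑ i, x i) + β * (x ⬝ᵥ (G.adjMatrix ℝ) *ᵥ x) ≤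
        -(∑ i, y i) + β * (y ⬝ᵥ (G.adjMatrix ℝ) *ᵥ y)) :
    IsStableSet G {i | x i = 1} ∧ {i | x i = 1}.ncard = stabilityNumber G :=
  support_of_qubo_minimizer_isMaxStableSet_general G β hβ x hx hmin
end
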